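/- Let n = 3k with k > 0 and let a_1,…,a_n be positive integers with ∑ a_i = k·b and b/4 < a_i < b/2 for each i. In the graph G'' (for each i ∈ {1,…,n}: a direct edge (w_{i-1},w_i) with delay a_i, and k−1 zero-delay two-edge routes from w_{i-1} to w_i through intermediate nodes v_i^j; all capacities 1), there exists a feasible integer flow of rate R = k from w_0 to w_n with maximum delay at most b if and only if there exists a partition {A_1,…,A_k} of {a_1,…,a_n} such that ∑_{a_i∈A_j} a_i = b for every j. -/

import Mathlib

/-- A directed network: each edge has a source node, a destination node,
a non-negative integer capacity and a non-negative integer delay. -/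
structure Network (V : Type) (E : Type) where
  src : E → V
  dst : E → V
  cap : E → ℕ
  delay : E → ℕ

namespace Network

variable {V E : Type}

/-- `N.IsPath s t p` : the list of edges `p` forms a directed path from `s` to `t`. -/
def IsPath (N : Network V E) : V → V → List E → Prop
  | s, t, [] => s = t
  | s, t, e :: es => N.src e = s ∧ N.IsPath (N.dst e) t es

/-- The delay of a path: the sum of the delays of its edges. -/
def pathDelay (N : Network V E) (p : List E) : ℕ := (p.map N.delay).sum

end Network

/-- A (path-based) flow from `s` to `t`: a finitely-supported assignment of
non-negative rates to `s`–`t` paths. -/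
structure PathFlow {V E : Type} (N : Network V E) (s t : V) where
  f : List E →₀ ℝ
  nonneg : ∀ p, 0 ≤ f p
  isPath : ∀ p ∈ f.support, N.IsPath s t p

namespace PathFlow

variable {V E : Type} [DecidableEq E] {N : Network V E} {s t : V}

/-- Total rate of the flow. -/
noncomputable def totalRate (F : PathFlow N s t) : ℝ := ∑ p ∈ F.f.support, F.f p

/-- Rate carried by edge `e`: the sum of the rates of all paths containing `e`. -/
noncomputable def edgeRate (F : PathFlow N s t) (e : E) : ℝ :=
  ∑ p ∈ F.f.support, if e ∈ p then F.f p else 0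

/-- Feasibility with rate `R`: total rate is `R` and every edge capacity is respected. -/
def Feasible (F : PathFlow N s t) (R : ℝ) : Prop :=
  F.totalRate = R ∧ ∀ e, F.edgeRate e ≤ (N.cap e : ℝ)

/-- The maximum delay over flow-carrying paths. -/
def maxDelay (F : PathFlow N s t) : ℕ := F.f.support.sup N.pathDelay

/-- An integer flow assigns a non-negative integer rate to every path. -/
def IsInteger (F : PathFlow N s t) : Prop := ∀ p, ∃ m : ℕ, F.f p = (m : ℝ)

end PathFlow

/-- Nodes of the 3-partition-reduction graph `G''`: `Sum.inl i` is `w_i` (`i = 0,…,n`),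
`Sum.inr (i, j)` is the intermediate node `v_{i+1}^{j+1}` (`j = 0,…,k-2`). -/
abbrev G3V (n k : ℕ) := Fin (n + 1) ⊕ (Fin n × Fin (k - 1))

/-- Edges of `G''`: `Sum.inl i` is the direct edge `(w_i, w_{i+1})` of delay `a i`;
`Sum.inr (Sum.inl (i, j))` is `(w_i, v_{i+1}^{j+1})` and `Sum.inr (Sum.inr (i, j))` is
`(v_{i+1}^{j+1}, w_{i+1})`, both of delay `0`. All edges have capacity `1`. -/
abbrev G3E (n k : ℕ) := Fin n ⊕ ((Fin n × Fin (k - 1)) ⊕ (Fin n × Fin (k - 1)))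

/-- The graph `G''` reduced from the 3-partition problem: between `w_i` and `w_{i+1}`
there are `k` parallel routes, the direct delay-`(a i)` edge and `k - 1` zero-delay
two-edge routes. -/
def G3 (n k : ℕ) (a : Fin n → ℕ) : Network (G3V n k) (G3E n k) where
  src
    | Sum.inl i => Sum.inl i.castSucc
    | Sum.inr (Sum.inl (i, _j)) => Sum.inl i.castSucc
    | Sum.inr (Sum.inr (i, j)) => Sum.inr (i, j)
  dst
    | Sum.inl i => Sum.inl i.succ
    | Sum.inr (Sum.inl (i, j)) => Sum.inr (i, j)
    | Sum.inr (Sum.inr (i, _j)) => Sum.inl i.succ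
  cap := fun _ => 1
  delay
    | Sum.inl i => a i
    | Sum.inr _ => 0

/-!
A unit-capacity integer flow of rate `k` is the same thing as `k` pairwise edge-disjoint
`w₀`–`wₙ` paths, each carrying rate one. Each segment `w_{i-1} → w_i` of `G''` is a cut with
exactly `k` edges leaving `w_{i-1}`, so the `k` paths use all of them, in particular the direct
edge of delay `a i`. Hence the sets `A j` of direct edges on the paths partition the indices;
each sum is at most `b` and they add up to `k·b`, so each is exactly `b`. Conversely, a partition
prescribes for each path the segments where it takes the direct edge, and in every segment the
remaining `k - 1` paths can be sent along the `k - 1` zero-delay routes.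
-/

namespace Network

variable {V E : Type} {N : Network V E}

theorem IsPath.append {s u t : V} {p q : List E} (hp : N.IsPath s u p) (hq : N.IsPath u t q) :
    N.IsPath s t (p ++ q) := by
  induction p generalizing s with
  | nil => exact (hp : s = u) ▸ hq
  | cons e es ih => exact ⟨hp.1, ih hp.2⟩

theorem isPath_flatMap_finRange {r : ℕ} (v : Fin (r + 1) → V) (g : Fin r → List E)
    (hg : ∀ i, N.IsPath (v i.castSucc) (v i.succ) (g i)) :
    N.IsPath (v 0) (v (Fin.last r)) ((List.finRange r).flatMap g) := by
  induction r with
  | zero => rfl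
  | succ r ih =>
    rw [List.finRange_succ, List.flatMap_cons, List.flatMap_map]
    refine (hg 0).append ?_
    simpa [Fin.succ_castSucc, Function.comp_def] using
      ih (v ∘ Fin.succ) (g ∘ Fin.succ) fun i => hg i.succ

theorem IsPath.exists_src_mem_dst_not_mem {S : Set V} {s t : V} {p : List E}
    (hp : N.IsPath s t p) (hs : s ∈ S) (ht : t ∉ S) :
    ∃ e ∈ p, N.src e ∈ S ∧ N.dst e ∉ S := by
  induction p generalizing s with
  | nil => exact absurd ((hp : s = t) ▸ hs) ht
  | cons e es ih =>
    by_cases hd : N.dst e ∈ S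
    · obtain ⟨e', he', h⟩ := ih hp.2 hd
      exact ⟨e', List.mem_cons_of_mem e he', h⟩
    · exact ⟨e, List.mem_cons_self, hp.1 ▸ hs, hd⟩

theorem IsPath.ne_nil {s t : V} {p : List E} (hp : N.IsPath s t p) (hst : s ≠ t) : p ≠ [] := by
  rintro rfl
  exact hst hp

theorem sum_toFinset_le_pathDelay [DecidableEq E] (p : List E) :
    ∑ e ∈ p.toFinset, N.delay e ≤ N.pathDelay p := by
  rw [pathDelay, Finset.sum_list_map_count]
  refine Finset.sum_le_sum fun e he => Nat.le_mul_of_pos_left _ ?_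
  exact List.count_pos_iff.mpr (List.mem_toFinset.mp he)

end Network

namespace PathFlow

variable {V E : Type} [DecidableEq E] {N : Network V E} {s t : V}

theorem sum_le_edgeRate (F : PathFlow N s t) {T : Finset (List E)} (hT : T ⊆ F.f.support)
    {e : E} (he : ∀ p ∈ T, e ∈ p) : ∑ p ∈ T, F.f p ≤ F.edgeRate e := by
  calc ∑ p ∈ T, F.f p = ∑ p ∈ T, if e ∈ p then F.f p else 0 :=
        Finset.sum_congr rfl fun p hp => (if_pos (he p hp)).symm
    _ ≤ F.edgeRate e :=
        Finset.sum_le_sum_of_subset_of_nonneg hT fun p _ _ => by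
          split_ifs
          exacts [F.nonneg p, le_rfl]

section UnitCapacity

variable {F : PathFlow N s t} (hst : s ≠ t) (hF : F.IsInteger)
  (hcap : ∀ e, F.edgeRate e ≤ 1)
include hst hF hcap

theorem eq_one_of_mem_support {p : List E} (hp : p ∈ F.f.support) : F.f p = 1 := by
  obtain ⟨m, hm⟩ := hF p
  obtain ⟨e, es, rfl⟩ := List.exists_cons_of_ne_nil ((F.isPath p hp).ne_nil hst)
  have hle : F.f (e :: es) ≤ 1 := by
    simpa using (F.sum_le_edgeRate (Finset.singleton_subset_iff.mpr hp)
      (by simp)).trans (hcap e)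
  have hne : F.f (e :: es) ≠ 0 := Finsupp.mem_support_iff.mp hp
  rw [hm] at hle hne ⊢
  have hm1 : m ≤ 1 := by exact_mod_cast hle
  have hm0 : m ≠ 0 := by exact_mod_cast hne
  rw [show m = 1 by omega, Nat.cast_one]

theorem disjoint_of_mem_support {p q : List E} (hp : p ∈ F.f.support) (hq : q ∈ F.f.support)
    (hpq : p ≠ q) : p.Disjoint q := by
  intro e hep heq
  have h := (F.sum_le_edgeRate (T := {p, q}) (by simp [Finset.insert_subset_iff, hp, hq])
    (by simp [hep, heq])).trans (hcap e)
  rw [Finset.sum_pair hpq, eq_one_of_mem_support hst hF hcap hp,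
    eq_one_of_mem_support hst hF hcap hq] at h
  norm_num at h

theorem card_support_eq_of_totalRate_eq {k : ℕ} (hk : F.totalRate = k) :
    F.f.support.card = k := by
  have : F.totalRate = F.f.support.card := by
    rw [totalRate, Finset.sum_congr rfl fun p hp => eq_one_of_mem_support hst hF hcap hp]
    simp
  exact_mod_cast this.symm.trans hk

end UnitCapacity

noncomputable def ofFinset (S : Finset (List E)) (hS : ∀ p ∈ S, N.IsPath s t p) :
    PathFlow N s t where
  f := Finsupp.indicator S fun _ _ => 1
  nonneg p := by
    rw [Finsupp.indicator_apply]
    split_ifs <;> norm_num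
  isPath p hp := hS p (Finsupp.support_indicator_subset _ _ hp)

section OfFinset

variable (S : Finset (List E)) (hS : ∀ p ∈ S, N.IsPath s t p)

theorem ofFinset_apply (p : List E) : (ofFinset S hS).f p = if p ∈ S then 1 else 0 := by
  simp [ofFinset, Finsupp.indicator_apply]

theorem support_ofFinset : (ofFinset S hS).f.support = S := by
  ext p
  simp [Finsupp.mem_support_iff, ofFinset_apply]

theorem isInteger_ofFinset : (ofFinset S hS).IsInteger := fun p =>
  ⟨if p ∈ S then 1 else 0, by rw [ofFinset_apply]; split_ifs <;> simp⟩

theorem totalRate_ofFinset : (ofFinset S hS).totalRate = S.card := by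
  simp [totalRate, support_ofFinset, ofFinset_apply]

theorem edgeRate_ofFinset (e : E) : (ofFinset S hS).edgeRate e = (S.filter (e ∈ ·)).card := by
  simp [edgeRate, support_ofFinset, ofFinset_apply, Finset.sum_ite,
    Finset.inter_eq_left.mpr (Finset.filter_subset _ S)]

theorem maxDelay_ofFinset : (ofFinset S hS).maxDelay = S.sup N.pathDelay := by
  rw [maxDelay, support_ofFinset]

end OfFinset

end PathFlow

namespace Network

variable {V E : Type} [DecidableEq E] {N : Network V E} {s t : V}

theorem exists_disjoint_paths_of_flow (hcap : ∀ e, N.cap e = 1) (hst : s ≠ t) {k D : ℕ}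
    {F : PathFlow N s t} (hF : F.IsInteger) (hfeas : F.Feasible k) (hD : F.maxDelay ≤ D) :
    ∃ P : Fin k → List E, (∀ j, N.IsPath s t (P j)) ∧
      Pairwise (fun j j' => (P j).Disjoint (P j')) ∧ ∀ j, N.pathDelay (P j) ≤ D := by
  have hedge : ∀ e, F.edgeRate e ≤ 1 := fun e => by simpa [hcap] using hfeas.2 e
  let σ := (Finset.equivFinOfCardEq
    (PathFlow.card_support_eq_of_totalRate_eq hst hF hedge hfeas.1)).symm
  refine ⟨fun j => σ j, fun j => F.isPath _ (σ j).2, fun j j' hjj => ?_,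
    fun j => (Finset.le_sup (σ j).2).trans hD⟩
  exact PathFlow.disjoint_of_mem_support hst hF hedge (σ j).2 (σ j').2
    fun h => hjj (σ.injective (Subtype.ext h))

theorem exists_flow_of_disjoint_paths (hcap : ∀ e, N.cap e = 1) (hst : s ≠ t) {k D : ℕ}
    {P : Fin k → List E} (hP : ∀ j, N.IsPath s t (P j))
    (hdisj : Pairwise fun j j' => (P j).Disjoint (P j')) (hD : ∀ j, N.pathDelay (P j) ≤ D) :
    ∃ F : PathFlow N s t, F.IsInteger ∧ F.Feasible k ∧ F.maxDelay ≤ D := by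
  have hinj : P.Injective := fun j j' h => by
    by_contra hjj
    obtain ⟨e, he⟩ := List.exists_mem_of_ne_nil _ ((hP j).ne_nil hst)
    exact hdisj hjj he (h ▸ he)
  have hS : ∀ p ∈ Finset.univ.image P, N.IsPath s t p := by simpa using hP
  refine ⟨PathFlow.ofFinset _ hS, PathFlow.isInteger_ofFinset _ hS, ⟨?_, fun e => ?_⟩, ?_⟩
  · simp [PathFlow.totalRate_ofFinset, Finset.card_image_of_injective _ hinj]
  · rw [PathFlow.edgeRate_ofFinset, hcap, Nat.cast_le]
    refine Finset.card_le_one.mpr fun p hp q hq => ?_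
    simp only [Finset.mem_filter, Finset.mem_image, Finset.mem_univ, true_and] at hp hq
    obtain ⟨⟨j, rfl⟩, hep⟩ := hp
    obtain ⟨⟨j', rfl⟩, heq⟩ := hq
    by_contra hne
    exact hdisj (fun h => hne (congrArg P h)) hep heq
  · simpa [PathFlow.maxDelay_ofFinset] using hD

theorem exists_integer_flow_iff_exists_disjoint_paths (hcap : ∀ e, N.cap e = 1) (hst : s ≠ t)
    (k D : ℕ) :
    (∃ F : PathFlow N s t, F.IsInteger ∧ F.Feasible k ∧ F.maxDelay ≤ D) ↔
    ∃ P : Fin k → List E, (∀ j, N.IsPath s t (P j)) ∧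
      Pairwise (fun j j' => (P j).Disjoint (P j')) ∧ ∀ j, N.pathDelay (P j) ≤ D :=
  ⟨fun ⟨_, hF, hfeas, hD⟩ => exists_disjoint_paths_of_flow hcap hst hF hfeas hD,
    fun ⟨_, hP, hdisj, hD⟩ => exists_flow_of_disjoint_paths hcap hst hP hdisj hD⟩

end Network

namespace G3

variable {n k : ℕ}

def UpTo (i : Fin n) : G3V n k → Prop
  | .inl m => m ≤ i.castSucc
  | .inr (i', _) => i' < i

def exitEdge (i : Fin n) : Option (Fin (k - 1)) → G3E n k
  | none => .inl i
  | some r => .inr (.inl (i, r))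

/-- `none` selects the direct edge of segment `i`, `some r` the zero-delay route through the
intermediate node `Sum.inr (i, r)`. -/
def segment (i : Fin n) : Option (Fin (k - 1)) → List (G3E n k)
  | none => [.inl i]
  | some r => [.inr (.inl (i, r)), .inr (.inr (i, r))]

def label : G3E n k → Fin n × Option (Fin (k - 1))
  | .inl i => (i, none)
  | .inr (.inl (i, r)) => (i, some r)
  | .inr (.inr (i, r)) => (i, some r)

def route (c : Fin n → Option (Fin (k - 1))) : List (G3E n k) :=
  (List.finRange n).flatMap fun i => segment i (c i)

theorem mem_segment_iff {e : G3E n k} {i : Fin n} {o : Option (Fin (k - 1))} :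
    e ∈ segment i o ↔ label e = (i, o) := by
  rcases o with _ | r <;> rcases e with i' | ⟨i', r'⟩ | ⟨i', r'⟩ <;>
    simp [segment, label, eq_comm]

theorem mem_route_iff {c : Fin n → Option (Fin (k - 1))} {e : G3E n k} :
    e ∈ route c ↔ c (label e).1 = (label e).2 := by
  simp only [route, List.mem_flatMap, List.mem_finRange, true_and, mem_segment_iff]
  exact ⟨fun ⟨i, h⟩ => by rw [h], fun h => ⟨(label e).1, by rw [h]⟩⟩

theorem disjoint_route {c c' : Fin n → Option (Fin (k - 1))} (h : ∀ i, c i ≠ c' i) :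
    (route c).Disjoint (route c') := fun _ he he' =>
  h _ ((mem_route_iff.mp he).trans (mem_route_iff.mp he').symm)

theorem isPath_route (a : Fin n → ℕ) (c : Fin n → Option (Fin (k - 1))) :
    (G3 n k a).IsPath (.inl 0) (.inl (Fin.last n)) (route c) := by
  refine Network.isPath_flatMap_finRange Sum.inl _ fun i => ?_
  cases c i
  exacts [⟨rfl, rfl⟩, ⟨rfl, rfl, rfl⟩]

theorem pathDelay_route (a : Fin n → ℕ) (c : Fin n → Option (Fin (k - 1))) :
    (G3 n k a).pathDelay (route c) = ∑ i with c i = none, a i := by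
  rw [Finset.sum_filter, Fin.sum_univ_def, Network.pathDelay, route, List.map_flatMap,
    List.flatMap_def, List.sum_flatten, List.map_map]
  congr 1
  refine List.map_congr_left fun i _ => ?_
  cases h : c i <;> simp [h, segment, G3]

theorem exists_eq_exitEdge_of_leaves_upTo {a : Fin n → ℕ} {i : Fin n} {e : G3E n k}
    (hs : UpTo i ((G3 n k a).src e)) (hd : ¬UpTo i ((G3 n k a).dst e)) :
    ∃ o, e = exitEdge i o := by
  rcases e with i' | ⟨i', r⟩ | ⟨i', r⟩ <;>
    simp only [G3, UpTo, Fin.le_def, Fin.lt_def, Fin.val_castSucc, Fin.val_succ] at hs hd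
  · exact ⟨none, by simp [exitEdge, Fin.ext_iff]; omega⟩
  · exact ⟨some r, by simp [exitEdge, Fin.ext_iff]; omega⟩
  · omega

theorem exists_exitEdge_mem {a : Fin n → ℕ} {p : List (G3E n k)}
    (hp : (G3 n k a).IsPath (.inl 0) (.inl (Fin.last n)) p) (i : Fin n) :
    ∃ o, exitEdge i o ∈ p := by
  obtain ⟨e, he, hs, hd⟩ := hp.exists_src_mem_dst_not_mem (S := {v | UpTo i v})
    (by simp [UpTo]) (by simp [UpTo, Fin.le_def])
  obtain ⟨o, rfl⟩ := exists_eq_exitEdge_of_leaves_upTo hs hd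
  exact ⟨o, he⟩

theorem exists_inl_mem_of_disjoint_paths (hk : 0 < k) {a : Fin n → ℕ}
    {P : Fin k → List (G3E n k)}
    (hP : ∀ j, (G3 n k a).IsPath (.inl 0) (.inl (Fin.last n)) (P j))
    (hdisj : Pairwise fun j j' => (P j).Disjoint (P j')) (i : Fin n) :
    ∃ j, Sum.inl i ∈ P j := by
  choose o ho using fun j => exists_exitEdge_mem (hP j) i
  have hinj : o.Injective := fun j j' h => by
    by_contra hjj
    exact hdisj hjj (ho j) (h ▸ ho j')
  obtain ⟨j, hj⟩ := ((Fintype.bijective_iff_injective_and_card o).mpr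
    ⟨hinj, by simp only [Fintype.card_fin, Fintype.card_option]; omega⟩).2 none
  exact ⟨j, by simpa [hj, exitEdge] using ho j⟩

theorem sum_inl_mem_le_pathDelay (a : Fin n → ℕ) (p : List (G3E n k)) :
    ∑ i with (Sum.inl i : G3E n k) ∈ p.toFinset, a i ≤ (G3 n k a).pathDelay p :=
  calc ∑ i with (Sum.inl i : G3E n k) ∈ p.toFinset, a i
      = ∑ e ∈ (Finset.univ.filter fun i => (Sum.inl i : G3E n k) ∈ p.toFinset).map .inl,
          (G3 n k a).delay e := by
        rw [Finset.sum_map]; rfl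
    _ ≤ ∑ e ∈ p.toFinset, (G3 n k a).delay e :=
        Finset.sum_le_sum_of_subset fun e => by
          simp only [Finset.mem_map, Finset.mem_filter]
          rintro ⟨i, ⟨-, hi⟩, rfl⟩
          exact hi
    _ ≤ (G3 n k a).pathDelay p := Network.sum_toFinset_le_pathDelay p

theorem exists_partition_of_disjoint_paths (hk : 0 < k) {a : Fin n → ℕ} {b : ℕ}
    (hsum : ∑ i, a i = k * b) (hb : 0 < b) {P : Fin k → List (G3E n k)}
    (hP : ∀ j, (G3 n k a).IsPath (.inl 0) (.inl (Fin.last n)) (P j))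
    (hdisj : Pairwise fun j j' => (P j).Disjoint (P j'))
    (hD : ∀ j, (G3 n k a).pathDelay (P j) ≤ b) :
    ∃ A : Fin k → Finset (Fin n),
      (∀ j, (A j).Nonempty) ∧ (∀ j j', j ≠ j' → Disjoint (A j) (A j')) ∧
      Finset.univ.biUnion A = Finset.univ ∧ ∀ j, ∑ i ∈ A j, a i = b := by
  set A : Fin k → Finset (Fin n) := fun j =>
    Finset.univ.filter fun i => (Sum.inl i : G3E n k) ∈ (P j).toFinset
  have hAdisj : ∀ j j', j ≠ j' → Disjoint (A j) (A j') := fun j j' hjj =>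
    Finset.disjoint_filter.mpr fun _ _ h h' =>
      hdisj hjj (List.mem_toFinset.mp h) (List.mem_toFinset.mp h')
  have hcov : Finset.univ.biUnion A = Finset.univ := Finset.eq_univ_of_forall fun i => by
    simpa [A] using exists_inl_mem_of_disjoint_paths hk hP hdisj i
  have hle : ∀ j, ∑ i ∈ A j, a i ≤ b := fun j =>
    (sum_inl_mem_le_pathDelay a (P j)).trans (hD j)
  have htot : ∑ j, ∑ i ∈ A j, a i = ∑ _j : Fin k, b := by
    rw [← Finset.sum_biUnion fun j _ j' _ => hAdisj j j', hcov, hsum]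
    simp
  have heq : ∀ j, ∑ i ∈ A j, a i = b := by
    simpa using (Finset.sum_eq_sum_iff_of_le fun j _ => hle j).mp htot
  exact ⟨A, fun j => Finset.nonempty_of_sum_ne_zero ((heq j).trans_ne hb.ne'), hAdisj, hcov,
    heq⟩

theorem exists_equiv_option_apply_eq_none (hk : 0 < k) (j₀ : Fin k) :
    ∃ ρ : Fin k ≃ Option (Fin (k - 1)), ρ j₀ = none := by
  let e : Fin k ≃ Option (Fin (k - 1)) :=
    (finCongr (Nat.succ_pred_eq_of_pos hk).symm).trans (finSuccEquiv (k - 1))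
  exact ⟨e.trans (Equiv.swap (e j₀) none), by simp⟩

theorem exists_disjoint_paths_of_partition (hk : 0 < k) {a : Fin n → ℕ} {b : ℕ}
    {A : Fin k → Finset (Fin n)} (hdisj : ∀ j j', j ≠ j' → Disjoint (A j) (A j'))
    (hcov : Finset.univ.biUnion A = Finset.univ) (hA : ∀ j, ∑ i ∈ A j, a i = b) :
    ∃ P : Fin k → List (G3E n k),
      (∀ j, (G3 n k a).IsPath (.inl 0) (.inl (Fin.last n)) (P j)) ∧
      (Pairwise fun j j' => (P j).Disjoint (P j')) ∧ ∀ j, (G3 n k a).pathDelay (P j) ≤ b := by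
  have hρ : ∀ i, ∃ ρ : Fin k ≃ Option (Fin (k - 1)), ∀ j, ρ j = none ↔ i ∈ A j := by
    intro i
    obtain ⟨j₀, -, hj₀⟩ := Finset.mem_biUnion.mp (hcov ▸ Finset.mem_univ i)
    obtain ⟨ρ, hρ⟩ := exists_equiv_option_apply_eq_none hk j₀
    refine ⟨ρ, fun j => ⟨fun h => ρ.injective (h.trans hρ.symm) ▸ hj₀, fun h => ?_⟩⟩
    by_contra hne
    exact Finset.disjoint_left.mp (hdisj j j₀ fun h' => hne (h' ▸ hρ)) h hj₀
  choose ρ hρ using hρ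
  refine ⟨fun j => route fun i => ρ i j, fun j => isPath_route a _,
    fun j j' hjj => disjoint_route fun i => (ρ i).injective.ne hjj, fun j => ?_⟩
  rw [pathDelay_route, ← hA j]
  exact (Finset.sum_congr (Finset.ext fun i => by simp [hρ]) fun _ _ => rfl).le

end G3

theorem g3_flow_iff_three_partition_general (k b : ℕ) (hk : 0 < k) (a : Fin (3 * k) → ℕ)
    (ha : ∀ i, 0 < a i) (hsum : ∑ i, a i = k * b) :
    (∃ F : PathFlow (G3 (3 * k) k a) (Sum.inl 0) (Sum.inl (Fin.last (3 * k))),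
        F.IsInteger ∧ F.Feasible k ∧ F.maxDelay ≤ b) ↔
    (∃ A : Fin k → Finset (Fin (3 * k)),
        (∀ j, (A j).Nonempty) ∧
        (∀ j j', j ≠ j' → Disjoint (A j) (A j')) ∧
        (Finset.univ.biUnion A = Finset.univ) ∧
        (∀ j, ∑ i ∈ A j, a i = b)) := by
  have hb : 0 < b := by
    have hpos : 0 < ∑ i, a i :=
      Finset.sum_pos (fun i _ => ha i) ⟨⟨0, by omega⟩, Finset.mem_univ _⟩
    exact Nat.pos_of_mul_pos_left (hsum ▸ hpos)
  have hst : (Sum.inl 0 : G3V (3 * k) k) ≠ .inl (Fin.last (3 * k)) := by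
    simp only [ne_eq, Sum.inl.injEq, Fin.ext_iff, Fin.val_zero, Fin.val_last]
    omega
  rw [Network.exists_integer_flow_iff_exists_disjoint_paths (fun _ => rfl) hst]
  constructor
  · rintro ⟨P, hP, hdisj, hD⟩
    exact G3.exists_partition_of_disjoint_paths hk hsum hb hP hdisj hD
  · rintro ⟨A, -, hdisj, hcov, hA⟩
    exact G3.exists_disjoint_paths_of_partition hk hdisj hcov hA

/-- **Reduction correctness for Theorem 2 (strong NP-completeness of Int-Min-Max-Delay).**
With `n = 3k`, `k > 0`, positive integers `a i` summing to `k·b` with `b/4 < a i < b/2`,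
there is a feasible integer flow of rate `R = k` from `w₀` to `wₙ` in `G''` with maximum
delay at most `b` if and only if the index set can be partitioned into `k` (non-empty,
pairwise disjoint, covering) classes `A j` with `∑ i ∈ A j, a i = b` for every `j`. -/
theorem g3_flow_iff_three_partition (k b : ℕ) (hk : 0 < k) (a : Fin (3 * k) → ℕ)
    (ha : ∀ i, 0 < a i) (hsum : ∑ i, a i = k * b)
    (hbound : ∀ i, b < 4 * a i ∧ 2 * a i < b) :
    (∃ F : PathFlow (G3 (3 * k) k a) (Sum.inl 0) (Sum.inl (Fin.last (3 * k))),
        F.IsInteger ∧ F.Feasible k ∧ F.maxDelay ≤ b) ↔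
    (∃ A : Fin k → Finset (Fin (3 * k)),
        (∀ j, (A j).Nonempty) ∧
        (∀ j j', j ≠ j' → Disjoint (A j) (A j')) ∧
        (Finset.univ.biUnion A = Finset.univ) ∧
        (∀ j, ∑ i ∈ A j, a i = b)) :=
  g3_flow_iff_three_partition_general k b hk a ha hsum
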